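/- arXiv:0711.4376 — 2 statements merged into one kernel-verified Lean document; each statement's English description precedes it below -/
import Mathlib

section
/- Suppose f : V → A is independent of J and g : V(m:f) → A is independent of K, with m ∈ K, n ∈ J, m ≠ n. Then there exist G : V → A independent of K and F : V(n:G) → A independent of J such that V(m:f)(n:g) = V(n:G)(m:F). -/
/-- Two valuations agree outside `J`: they take the same values on all coordinates not in `J`. -/
def AgreeOutside {ι A : Type*} (J : Set ι) (a b : ι → A) : Prop :=
  ∀ i, i ∉ J → a i = b i

/-- `𝒰` is a `J`-saturated disjoint cover of `V`. -/
def IsSatDisjCover {ι A : Type*} (J : Set ι) (V : Set (ι → A))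
    (𝒰 : Set (Set (ι → A))) : Prop :=
  ⋃₀ 𝒰 = V ∧ 𝒰.Pairwise Disjoint ∧
    ∀ a ∈ V, ∀ b ∈ V, AgreeOutside J a b → ∀ U ∈ 𝒰, a ∈ U → b ∈ U

/-- `V = V₁ ∪_J V₂`: a `J`-saturated disjoint (binary) cover of `V`. -/
def UnionJ {ι A : Type*} (J : Set ι) (V V₁ V₂ : Set (ι → A)) : Prop :=
  V₁ ∪ V₂ = V ∧ Disjoint V₁ V₂ ∧
    ∀ a ∈ V, ∀ b ∈ V, AgreeOutside J a b →
      ((a ∈ V₁ → b ∈ V₁) ∧ (a ∈ V₂ → b ∈ V₂))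

/-- `f : V → A` is independent of `J`. -/
def IndepOf {ι A : Type*} (J : Set ι) (V : Set (ι → A)) (f : (ι → A) → A) : Prop :=
  ∀ a ∈ V, ∀ b ∈ V, AgreeOutside J a b → f a = f b

/-- `V(n:f) = { ⃗a(n : f ⃗a) : ⃗a ∈ V }`. -/
def teamUpd {ι A : Type*} [DecidableEq ι] (n : ι) (f : (ι → A) → A)
    (V : Set (ι → A)) : Set (ι → A) :=
  (fun a => Function.update a n (f a)) '' V

/-- `V(n:A) = { ⃗a(n : c) : ⃗a ∈ V, c ∈ A }`. -/
def teamExp {ι A : Type*} [DecidableEq ι] (n : ι) (V : Set (ι → A)) : Set (ι → A) :=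
  {x | ∃ a ∈ V, ∃ c : A, x = Function.update a n c}

/-!
Take `G a := g (a(m : f a))`; it is independent of `K` because `m ∈ K`, so the updated
coordinate is invisible to `≈_K`. Since `n ∈ J`, the valuation `a(n : G a)` agrees with `a`
outside `J`, so the `J`-independent `f` descends to a `J`-independent `F` on `V(n:G)` with
`F (a(n : G a)) = f a`. Both teams are then the image of `V` under
`a ↦ a(m : f a)(n : G a)`, because updates at distinct coordinates commute.
-/

open Function

section AgreeOutside

variable {ι A : Type*} {J : Set ι} {a b c : ι → A}

theorem AgreeOutside.symm (h : AgreeOutside J a b) : AgreeOutside J b a :=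
  fun i hi => (h i hi).symm

theorem AgreeOutside.trans (hab : AgreeOutside J a b) (hbc : AgreeOutside J b c) :
    AgreeOutside J a c :=
  fun i hi => (hab i hi).trans (hbc i hi)

theorem agreeOutside_update_self [DecidableEq ι] {n : ι} (hn : n ∈ J) (x : A) :
    AgreeOutside J (update a n x) a :=
  fun _ hi => update_of_ne (ne_of_mem_of_not_mem hn hi).symm _ _

theorem AgreeOutside.update [DecidableEq ι] {n : ι} (hn : n ∈ J) (h : AgreeOutside J a b)
    (x y : A) : AgreeOutside J (update a n x) (update b n y) :=
  ((agreeOutside_update_self hn x).trans h).trans (agreeOutside_update_self hn y).symm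

end AgreeOutside

section IndepOf

variable {ι A : Type*} {J : Set ι} {V : Set (ι → A)} {f : (ι → A) → A}

theorem IndepOf.comp_update [DecidableEq ι] {m : ι} {g : (ι → A) → A} (hm : m ∈ J)
    (hg : IndepOf J (teamUpd m f V) g) :
    IndepOf J V (fun a => g (update a m (f a))) :=
  fun a ha b hb hab => hg _ ⟨a, ha, rfl⟩ _ ⟨b, hb, rfl⟩ (hab.update hm _ _)

theorem IndepOf.exists_factor_image {φ : (ι → A) → (ι → A)} (hf : IndepOf J V f)
    (hφ : ∀ a ∈ V, AgreeOutside J (φ a) a) :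
    ∃ F : (ι → A) → A, IndepOf J (φ '' V) F ∧ ∀ a ∈ V, F (φ a) = f a := by
  classical
  let F : (ι → A) → A := fun x => if h : x ∈ φ '' V then f h.choose else f x
  have hF : ∀ a ∈ V, F (φ a) = f a := by
    intro a ha
    have h : φ a ∈ φ '' V := ⟨a, ha, rfl⟩
    obtain ⟨hmem, heq⟩ := h.choose_spec
    simp only [F, dif_pos h]
    exact hf _ hmem _ ha ((hφ _ hmem).symm.trans (heq.symm ▸ hφ a ha))
  refine ⟨F, ?_, hF⟩
  rintro _ ⟨a, ha, rfl⟩ _ ⟨b, hb, rfl⟩ hab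
  rw [hF a ha, hF b hb]
  exact hf a ha b hb (((hφ a ha).symm.trans hab).trans (hφ b hb))

end IndepOf

theorem teamUpd_teamUpd {ι A : Type*} [DecidableEq ι] (m n : ι) (f g : (ι → A) → A)
    (V : Set (ι → A)) :
    teamUpd n g (teamUpd m f V) =
      (fun a => update (update a m (f a)) n (g (update a m (f a)))) '' V :=
  Set.image_image _ _ _

/-- Commuting variations: if `f : V → A` is independent of `J`, `g : V(m:f) → A` is
independent of `K`, `m ∈ K`, `n ∈ J`, `m ≠ n`, then there are `G : V → A` independent
of `K` and `F : V(n:G) → A` independent of `J` with `V(m:f)(n:g) = V(n:G)(m:F)`. -/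
theorem exists_commute_indep {ι A : Type*} [DecidableEq ι] (J K : Set ι) (m n : ι)
    (hm : m ∈ K) (hn : n ∈ J) (hmn : m ≠ n) (V : Set (ι → A)) (f g : (ι → A) → A)
    (hf : IndepOf J V f) (hg : IndepOf K (teamUpd m f V) g) :
    ∃ G F : (ι → A) → A, IndepOf K V G ∧ IndepOf J (teamUpd n G V) F ∧
      teamUpd n g (teamUpd m f V) = teamUpd m F (teamUpd n G V) := by
  set G : (ι → A) → A := fun a => g (update a m (f a))
  obtain ⟨F, hFindep, hF⟩ := hf.exists_factor_image (φ := fun a => update a n (G a))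
    fun a _ => agreeOutside_update_self hn _
  refine ⟨G, F, hg.comp_update hm, hFindep, ?_⟩
  rw [teamUpd_teamUpd, teamUpd_teamUpd]
  refine Set.image_congr fun a ha => ?_
  rw [hF a ha, update_comm hmn.symm]
end

section
/- Trump semantics is downward closed: for every IFG formula φ, suitable structure 𝔄, and teams V' ⊆ V, if 𝔄 ⊨⁺ φ[V] then 𝔄 ⊨⁺ φ[V'], and if 𝔄 ⊨⁻ φ[V] then 𝔄 ⊨⁻ φ[V']. -/
/-- IFG formulas over an abstract supply of atomic formulas (given as predicates on
valuations), built by negation `∼`, slashed disjunction `∨_J`, and slashed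
existential quantification `∃ v_n / J`. -/
inductive IFG (ι A : Type*) where
  | atom : ((ι → A) → Prop) → IFG ι A
  | not : IFG ι A → IFG ι A
  | or : Set ι → IFG ι A → IFG ι A → IFG ι A
  | ex : ι → Set ι → IFG ι A → IFG ι A

/-- Trump semantics: `Sat φ true V` means `𝔄 ⊨⁺ φ[V]` and `Sat φ false V` means
`𝔄 ⊨⁻ φ[V]`. -/
def Sat {ι A : Type*} [DecidableEq ι] : IFG ι A → Bool → Set (ι → A) → Prop
  | .atom P, true, V => ∀ a ∈ V, P a
  | .atom P, false, V => ∀ a ∈ V, ¬ P a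
  | .not ψ, b, V => Sat ψ (!b) V
  | .or J ψ₁ ψ₂, true, V =>
      ∃ V₁ V₂, UnionJ J V V₁ V₂ ∧ Sat ψ₁ true V₁ ∧ Sat ψ₂ true V₂
  | .or J ψ₁ ψ₂, false, V => Sat ψ₁ false V ∧ Sat ψ₂ false V
  | .ex n J ψ, true, V => ∃ f, IndepOf J V f ∧ Sat ψ true (teamUpd n f V)
  | .ex n J ψ, false, V => Sat ψ false (teamExp n V)

theorem UnionJ.inter_right {ι A : Type*} {J : Set ι} {V V₁ V₂ V' : Set (ι → A)}
    (h : UnionJ J V V₁ V₂) (hV' : V' ⊆ V) : UnionJ J V' (V₁ ∩ V') (V₂ ∩ V') := by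
  obtain ⟨hcover, hdisj, hsat⟩ := h
  refine ⟨?_, hdisj.mono Set.inter_subset_left Set.inter_subset_left, ?_⟩
  · rw [← Set.union_inter_distrib_right, hcover, Set.inter_eq_right.mpr hV']
  · intro a ha b hb hab
    have hs := hsat a (hV' ha) b (hV' hb) hab
    exact ⟨fun h => ⟨hs.1 h.1, hb⟩, fun h => ⟨hs.2 h.1, hb⟩⟩

theorem IndepOf.mono {ι A : Type*} {J : Set ι} {V V' : Set (ι → A)} {f : (ι → A) → A}
    (hf : IndepOf J V f) (hV' : V' ⊆ V) : IndepOf J V' f :=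
  fun a ha b hb hab => hf a (hV' ha) b (hV' hb) hab

theorem teamUpd_mono {ι A : Type*} [DecidableEq ι] (n : ι) (f : (ι → A) → A) :
    Monotone (teamUpd n f) :=
  fun _ _ hV => Set.image_mono hV

theorem teamExp_mono {ι A : Type*} [DecidableEq ι] (n : ι) : Monotone (teamExp (A := A) n) := by
  rintro V V' hV x ⟨a, ha, c, rfl⟩
  exact ⟨a, hV ha, c, rfl⟩

theorem sat_antitone {ι A : Type*} [DecidableEq ι] (φ : IFG ι A) (b : Bool) :
    Antitone (Sat φ b) := by
  induction φ generalizing b with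
  | atom P => cases b <;> exact fun V' V hV' h a ha => h a (hV' ha)
  | not ψ ih => exact ih !b
  | or J ψ₁ ψ₂ ih₁ ih₂ =>
    intro V' V hV' h
    cases b with
    | false => exact ⟨ih₁ false hV' h.1, ih₂ false hV' h.2⟩
    | true =>
      obtain ⟨V₁, V₂, hcover, h₁, h₂⟩ := h
      exact ⟨V₁ ∩ V', V₂ ∩ V', hcover.inter_right hV',
        ih₁ true Set.inter_subset_left h₁, ih₂ true Set.inter_subset_left h₂⟩
  | ex n J ψ ih =>
    intro V' V hV' h
    cases b with
    | false => exact ih false (teamExp_mono n hV') h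
    | true =>
      obtain ⟨f, hf, hsat⟩ := h
      exact ⟨f, hf.mono hV', ih true (teamUpd_mono n f hV') hsat⟩

/-- Downward closure of trump semantics: satisfaction transfers to subteams. -/
theorem sat_downward_closed {ι A : Type*} [DecidableEq ι] (φ : IFG ι A)
    (V V' : Set (ι → A)) (hV' : V' ⊆ V) :
    (Sat φ true V → Sat φ true V') ∧ (Sat φ false V → Sat φ false V') :=
  ⟨sat_antitone φ true hV', sat_antitone φ false hV'⟩
end
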